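/- arXiv:1809.04808 — 2 statements merged into one kernel-verified Lean document; each statement's English description precedes it below -/
import Mathlib

section
/- Every strongly regular ROC curve is the uniform limit of a sequence of mixtures of Beta CDFs: if R : [0,1] → [0,1] is continuously differentiable with bounded derivative, R(0)=0, R(1)=1, and R nondecreasing, then there exist mixtures R_n(p) = ∑_k w_{n,k} B_{α_{n,k},β_{n,k}}(p) with nonnegative weights summing to 1 converging to R uniformly on [0,1]. -/
/-!
For integer parameters the Beta CDF is a binomial tail: `B_{k+1,n-k+1}(p) = ℙ(Bin(n+1, p) > k)`.
Both sides are antiderivatives of a multiple of `p ^ k * (1 - p) ^ (n - k)` vanishing at `0`, and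
the tail equals `1` at `p = 1`, which pins down the normalising Beta integral. Summation by parts
then turns the mixture with weights `R((k+1)/(n+1)) - R(k/(n+1))` into the Bernstein polynomial of
`R` of degree `n + 1`, which converges uniformly to `R` by Bernstein's theorem. Monotonicity of `R`
makes the weights nonnegative and `R 0 = 0`, `R 1 = 1` make them sum to `1`.
-/

/-- The CDF of the Beta(α,β) distribution, as normalized incomplete beta integral. -/
noncomputable def betaCDF (α β : ℝ) (p : ℝ) : ℝ :=
  (∫ q in (0:ℝ)..p, q ^ (α - 1) * (1 - q) ^ (β - 1)) /
    (∫ q in (0:ℝ)..1, q ^ (α - 1) * (1 - q) ^ (β - 1))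

open Polynomial Finset Filter

theorem Finset.sum_range_sub_mul_sum_Ico {R : Type*} [CommRing R] (x b : ℕ → R) (N : ℕ) :
    ∑ k ∈ range N, (x (k + 1) - x k) * ∑ i ∈ Ico k N, b (i + 1) =
      ∑ j ∈ range (N + 1), (x j - x 0) * b j := by
  induction N with
  | zero => simp
  | succ N ih =>
    have hsplit : ∀ k ∈ range (N + 1), (x (k + 1) - x k) * ∑ i ∈ Ico k (N + 1), b (i + 1) =
        (x (k + 1) - x k) * ∑ i ∈ Ico k N, b (i + 1) + (x (k + 1) - x k) * b (N + 1) := by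
      intro k hk
      rw [sum_Ico_succ_top (mem_range_succ_iff.mp hk), mul_add]
    rw [sum_congr rfl hsplit, sum_add_distrib, ← sum_mul, sum_range_sub, sum_range_succ, ih,
      sum_range_succ _ (N + 1)]
    simp

/-- The binomial upper tail `ℙ(Bin(n + 1, X) > k)`. -/
noncomputable def bernsteinTail (R : Type*) [CommRing R] (n k : ℕ) : R[X] :=
  ∑ i ∈ Ico k (n + 1), bernsteinPolynomial R (n + 1) (i + 1)

namespace bernsteinTail

variable {R : Type*} [CommRing R]

theorem derivative {n k : ℕ} (hk : k ≤ n) :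
    Polynomial.derivative (bernsteinTail R n k) = (n + 1) * bernsteinPolynomial R n k := by
  simp only [bernsteinTail, derivative_sum, bernsteinPolynomial.derivative_succ_aux, ← mul_sum]
  have htelescope : ∑ i ∈ Ico k (n + 1),
      (bernsteinPolynomial R n i - bernsteinPolynomial R n (i + 1)) =
        bernsteinPolynomial R n k - bernsteinPolynomial R n (n + 1) := by
    rw [← neg_inj, ← sum_neg_distrib]
    simp only [neg_sub]
    exact sum_Ico_sub _ (by omega)
  rw [htelescope, bernsteinPolynomial.eq_zero_of_lt R (Nat.lt_succ_self n), sub_zero]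

theorem eval_zero (n k : ℕ) : (bernsteinTail R n k).eval 0 = 0 := by
  simp [bernsteinTail, eval_finsetSum, bernsteinPolynomial.eval_at_0]

theorem eval_one {n k : ℕ} (hk : k ≤ n) : (bernsteinTail R n k).eval 1 = 1 := by
  simp [bernsteinTail, eval_finsetSum, bernsteinPolynomial.eval_at_1, hk]

end bernsteinTail

theorem betaCDF_natCast_add_one_eq_of_hasDerivAt {k m : ℕ} {F : ℝ → ℝ} {c : ℝ}
    (hF : ∀ x, HasDerivAt F (c * (x ^ k * (1 - x) ^ m)) x) (hF0 : F 0 = 0) (hF1 : F 1 = 1)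
    (p : ℝ) : betaCDF (k + 1) (m + 1) p = F p := by
  have hint : ∀ a, c * ∫ x in (0:ℝ)..a, x ^ k * (1 - x) ^ m = F a := fun a => by
    rw [← intervalIntegral.integral_const_mul,
      intervalIntegral.integral_eq_sub_of_hasDerivAt (fun x _ => hF x)
        (by apply Continuous.intervalIntegrable; fun_prop), hF0, sub_zero]
  have hc : c ≠ 0 := by
    rintro rfl
    simpa [hF1] using hint 1
  unfold betaCDF
  simp only [add_sub_cancel_right, Real.rpow_natCast]
  rw [← mul_div_mul_left _ _ hc, hint, hint, hF1, div_one]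

theorem betaCDF_eq_eval_bernsteinTail {n k : ℕ} (hk : k ≤ n) (p : ℝ) :
    betaCDF (k + 1) ((n - k : ℕ) + 1) p = (bernsteinTail ℝ n k).eval p := by
  refine betaCDF_natCast_add_one_eq_of_hasDerivAt (F := fun x => (bernsteinTail ℝ n k).eval x)
    (c := (n + 1) * n.choose k) (fun x => ?_) (bernsteinTail.eval_zero n k)
    (bernsteinTail.eval_one hk) p
  refine ((bernsteinTail ℝ n k).hasDerivAt x).congr_deriv ?_
  simp [bernsteinTail.derivative hk, bernsteinPolynomial]
  ring

theorem sum_sub_mul_betaCDF_eq_sum_bernsteinPolynomial (g : ℕ → ℝ) (n : ℕ) (p : ℝ) :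
    ∑ k ∈ range (n + 1), (g (k + 1) - g k) * betaCDF (k + 1) ((n - k : ℕ) + 1) p =
      ∑ j ∈ range (n + 2), (g j - g 0) * (bernsteinPolynomial ℝ (n + 1) j).eval p := by
  rw [sum_congr rfl fun k hk => by
    rw [betaCDF_eq_eval_bernsteinTail (mem_range_succ_iff.mp hk)]]
  simp only [bernsteinTail, eval_finsetSum]
  exact sum_range_sub_mul_sum_Ico g (fun j => (bernsteinPolynomial ℝ (n + 1) j).eval p) (n + 1)

theorem tendstoUniformlyOn_sum_bernsteinPolynomial {f : ℝ → ℝ}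
    (hf : ContinuousOn f (Set.Icc 0 1)) :
    TendstoUniformlyOn
      (fun n x => ∑ j ∈ range (n + 1), f (j / n) * (bernsteinPolynomial ℝ n j).eval x)
      f atTop (Set.Icc 0 1) := by
  let F : C(unitInterval, ℝ) := ⟨(Set.Icc 0 1).domRestrict f, hf.domRestrict⟩
  rw [tendstoUniformlyOn_iff_tendstoUniformly_comp_coe, ← tendstoUniformlyOn_univ]
  refine (tendstoUniformlyOn_univ.mpr (ContinuousMap.tendsto_iff_tendstoUniformly.mp
    (bernsteinApproximation_uniform F))).congr (Eventually.of_forall fun n x _ => ?_)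
  simp [bernsteinApproximation.apply, bernstein, bernstein.z, F, mul_comm,
    Fin.sum_univ_eq_sum_range (fun j => f (j / n) * (bernsteinPolynomial ℝ n j).eval (x : ℝ))]

theorem strongly_regular_roc_uniform_limit_of_beta_mixtures_general
    (R R' : ℝ → ℝ)
    (hmono : MonotoneOn R (Set.Icc (0:ℝ) 1))
    (hR0 : R 0 = 0) (hR1 : R 1 = 1)
    (hderiv : ∀ p ∈ Set.Icc (0:ℝ) 1, HasDerivAt R (R' p) p) :
    ∃ (N : ℕ → ℕ) (w a b : ℕ → ℕ → ℝ),
      (∀ n, ∀ k ∈ Finset.range (N n), 0 ≤ w n k ∧ 0 < a n k ∧ 0 < b n k) ∧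
      (∀ n, ∑ k ∈ Finset.range (N n), w n k = 1) ∧
      TendstoUniformlyOn
        (fun (n : ℕ) (p : ℝ) => ∑ k ∈ Finset.range (N n), w n k * betaCDF (a n k) (b n k) p)
        R Filter.atTop (Set.Icc (0:ℝ) 1) := by
  have hgrid : ∀ n k : ℕ, k ≤ n + 1 → (k : ℝ) / (n + 1) ∈ Set.Icc (0:ℝ) 1 := fun n k hk =>
    ⟨by positivity, div_le_one_of_le₀ (by exact_mod_cast hk) (by positivity)⟩
  have hRcont : ContinuousOn R (Set.Icc 0 1) := fun p hp =>
    (hderiv p hp).continuousAt.continuousWithinAt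
  refine ⟨fun n => n + 1, fun n k => R ((k + 1) / (n + 1)) - R (k / (n + 1)),
    fun _ k => k + 1, fun n k => (n - k : ℕ) + 1,
    fun n k hk => ⟨?_, by positivity, by positivity⟩, fun n => ?_, ?_⟩
  · have hk1 : k + 1 ≤ n + 1 := mem_range.mp hk
    exact sub_nonneg.mpr (hmono (hgrid n k (by omega)) (by exact_mod_cast hgrid n (k + 1) hk1)
      (by gcongr; linarith))
  · have htelescope := sum_range_sub (fun k : ℕ => R (k / (n + 1))) (n + 1)
    push_cast at htelescope
    rw [htelescope, div_self (by positivity), hR1, zero_div, hR0, sub_zero]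
  · refine TendstoUniformlyOn.congr (fun u hu => (tendsto_add_atTop_nat 1).eventually
      (tendstoUniformlyOn_sum_bernsteinPolynomial hRcont u hu))
      (Eventually.of_forall fun n p _ => ?_)
    have hmixture :=
      sum_sub_mul_betaCDF_eq_sum_bernsteinPolynomial (fun j : ℕ => R (j / (n + 1))) n p
    push_cast at hmixture ⊢
    simp [hmixture, hR0]

/-- every strongly regular ROC curve (nondecreasing, continuously
differentiable with bounded derivative, R(0)=0, R(1)=1, values in [0,1]) is the
uniform limit of mixtures of Beta CDFs with nonnegative weights summing to 1. -/
theorem strongly_regular_roc_uniform_limit_of_beta_mixtures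
    (R R' : ℝ → ℝ)
    (hmono : MonotoneOn R (Set.Icc (0:ℝ) 1))
    (hmaps : ∀ p ∈ Set.Icc (0:ℝ) 1, R p ∈ Set.Icc (0:ℝ) 1)
    (hR0 : R 0 = 0) (hR1 : R 1 = 1)
    (hderiv : ∀ p ∈ Set.Icc (0:ℝ) 1, HasDerivAt R (R' p) p)
    (hderivcont : ContinuousOn R' (Set.Icc (0:ℝ) 1))
    (hbdd : ∃ M : ℝ, ∀ p ∈ Set.Icc (0:ℝ) 1, |R' p| ≤ M) :
    ∃ (N : ℕ → ℕ) (w a b : ℕ → ℕ → ℝ),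
      (∀ n, ∀ k ∈ Finset.range (N n), 0 ≤ w n k ∧ 0 < a n k ∧ 0 < b n k) ∧
      (∀ n, ∑ k ∈ Finset.range (N n), w n k = 1) ∧
      TendstoUniformlyOn
        (fun (n : ℕ) (p : ℝ) => ∑ k ∈ Finset.range (N n), w n k * betaCDF (a n k) (b n k) p)
        R Filter.atTop (Set.Icc (0:ℝ) 1) :=
  strongly_regular_roc_uniform_limit_of_beta_mixtures_general R R' hmono hR0 hR1 hderiv
end

section
/- For the binormal model, AUC(μ,σ) = Φ(μ/√(1+σ²)), i.e. ∫₀¹ Φ(μ + σΦ^{-1}(p)) dp = Φ(μ/√(1+σ²)). -/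
/-- The standard normal density. -/
noncomputable def stdNormalPDF (x : ℝ) : ℝ :=
  Real.exp (-x ^ 2 / 2) / Real.sqrt (2 * Real.pi)

/-- The standard normal CDF. -/
noncomputable def stdNormalCDF (x : ℝ) : ℝ :=
  ∫ t in Set.Iic x, stdNormalPDF t

/-! If `X` and `Y` are independent standard normal variables, then `Φ(μ + σ y) = P(X ≤ μ + σ y)`,
so after the substitution `p = Φ(y)` the AUC is `P(X - σY ≤ μ)`. Since `X - σY` is centred normal
with variance `1 + σ²` (the convolution of `N(0, σ²)` and `N(0, 1)`), this is
`Φ(μ / √(1 + σ²))`. -/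

open MeasureTheory ProbabilityTheory Set

lemma hasDerivAt_integral_Iic {f : ℝ → ℝ} (hf : Integrable f) (hfc : Continuous f) (x : ℝ) :
    HasDerivAt (fun y => ∫ t in Iic y, f t) (f x) x := by
  have hsplit : (fun y => ∫ t in Iic y, f t) =
      fun y => (∫ t in Iic 0, f t) + ∫ t in (0 : ℝ)..y, f t := by
    funext y
    rw [← intervalIntegral.integral_Iic_sub_Iic hf.integrableOn hf.integrableOn, add_sub_cancel]
  rw [hsplit]
  exact (intervalIntegral.integral_hasDerivAt_right hf.intervalIntegrable
    hfc.stronglyMeasurable.stronglyMeasurableAtFilter hfc.continuousAt).const_add _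

lemma measureReal_conv_Iic (ρ ν : Measure ℝ) [IsFiniteMeasure ρ] [IsFiniteMeasure ν] (c : ℝ) :
    (ρ ∗ ν).real (Iic c) = ∫ x, ν.real (Iic (c - x)) ∂ρ := by
  rw [← integral_indicator_one measurableSet_Iic,
    integral_conv ((integrable_const 1).indicator measurableSet_Iic)]
  congr 1 with x
  rw [← integral_indicator_one measurableSet_Iic]
  congr 1 with y
  simp only [indicator, mem_Iic, le_sub_iff_add_le', Pi.one_apply]

lemma measureReal_map_const_mul_Iic (μ : Measure ℝ) {τ : ℝ} (hτ : 0 < τ) (c : ℝ) :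
    (μ.map (τ * ·)).real (Iic c) = μ.real (Iic (c / τ)) := by
  rw [map_measureReal_apply (measurable_const_mul τ) measurableSet_Iic]
  congr 1 with x
  simp only [mem_preimage, mem_Iic, le_div_iff₀ hτ, mul_comm]

lemma integral_gaussianReal_real_Iic_affine (a b : ℝ) :
    ∫ t, (gaussianReal 0 1).real (Iic (a + b * t)) ∂(gaussianReal 0 1) =
      (gaussianReal 0 1).real (Iic (a / √(1 + b ^ 2))) := by
  have hτ : 0 < √(1 + b ^ 2) := Real.sqrt_pos.mpr (by positivity)
  have hconv : (gaussianReal 0 1).map (-b * ·) ∗ gaussianReal 0 1 =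
      (gaussianReal 0 1).map (√(1 + b ^ 2) * ·) := by
    rw [gaussianReal_map_const_mul, gaussianReal_map_const_mul, gaussianReal_conv_gaussianReal]
    congr 1
    · ring
    · ext
      simp only [NNReal.coe_add, NNReal.coe_mk, NNReal.coe_one, mul_one]
      rw [Real.sq_sqrt (by positivity)]
      ring
  rw [← measureReal_map_const_mul_Iic _ hτ, ← hconv, measureReal_conv_Iic,
    integral_map (measurable_const_mul _).aemeasurable]
  · simp only [sub_neg_eq_add, neg_mul]
  · refine (Antitone.measurable fun x y hxy => ?_).aestronglyMeasurable
    exact measureReal_mono (Iic_subset_Iic.mpr (by linarith))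

lemma stdNormalPDF_eq_gaussianPDFReal : stdNormalPDF = gaussianPDFReal 0 1 := by
  funext x
  simp [stdNormalPDF, gaussianPDFReal, div_eq_inv_mul, mul_comm]

lemma stdNormalPDF_pos (x : ℝ) : 0 < stdNormalPDF x :=
  stdNormalPDF_eq_gaussianPDFReal ▸ gaussianPDFReal_pos 0 1 x one_ne_zero

lemma stdNormalCDF_eq_cdf : stdNormalCDF = cdf (gaussianReal 0 1) := by
  funext x
  rw [cdf_eq_real, measureReal_def, gaussianReal_apply_eq_integral _ one_ne_zero,
    ENNReal.toReal_ofReal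
      (setIntegral_nonneg measurableSet_Iic fun t _ => gaussianPDFReal_nonneg _ _ t),
    stdNormalCDF, stdNormalPDF_eq_gaussianPDFReal]

lemma hasDerivAt_stdNormalCDF (x : ℝ) : HasDerivAt stdNormalCDF (stdNormalPDF x) x :=
  hasDerivAt_integral_Iic (stdNormalPDF_eq_gaussianPDFReal ▸ integrable_gaussianPDFReal 0 1)
    (by unfold stdNormalPDF; fun_prop) x

lemma strictMono_stdNormalCDF : StrictMono stdNormalCDF :=
  strictMono_of_hasDerivAt_pos hasDerivAt_stdNormalCDF stdNormalPDF_pos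

lemma range_stdNormalCDF : range stdNormalCDF = Ioo 0 1 := by
  have hbot := tendsto_cdf_atBot (gaussianReal 0 1)
  have htop := tendsto_cdf_atTop (gaussianReal 0 1)
  rw [← stdNormalCDF_eq_cdf] at hbot htop
  have hmono := strictMono_stdNormalCDF
  have hcont : Continuous stdNormalCDF :=
    continuous_iff_continuousAt.mpr fun x => (hasDerivAt_stdNormalCDF x).continuousAt
  refine Subset.antisymm ?_ ?_
  · rintro _ ⟨x, rfl⟩
    exact ⟨(hmono.monotone.le_of_tendsto hbot (x - 1)).trans_lt (hmono (sub_one_lt x)),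
      (hmono (lt_add_one x)).trans_le (hmono.monotone.ge_of_tendsto htop (x + 1))⟩
  · rw [← image_univ]
    exact isPreconnected_univ.intermediate_value_Ioo (by simp) (by simp) hcont.continuousOn
      hbot htop

lemma integral_zero_one_eq_integral_comp_stdNormalCDF {E : Type*} [NormedAddCommGroup E]
    [NormedSpace ℝ E] (g : ℝ → E) :
    ∫ p in (0 : ℝ)..1, g p = ∫ x, g (stdNormalCDF x) ∂(gaussianReal 0 1) := by
  have hcov := integral_image_eq_integral_abs_deriv_smul MeasurableSet.univ
    (fun x _ => (hasDerivAt_stdNormalCDF x).hasDerivWithinAt)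
    strictMono_stdNormalCDF.injective.injOn g
  rw [image_univ, range_stdNormalCDF, Measure.restrict_univ] at hcov
  rw [intervalIntegral.integral_of_le zero_le_one, integral_Ioc_eq_integral_Ioo, hcov,
    integral_gaussianReal_eq_integral_smul one_ne_zero, ← stdNormalPDF_eq_gaussianPDFReal]
  simp_rw [abs_of_pos (stdNormalPDF_pos _)]

lemma integral_stdNormalCDF_affine (a b : ℝ) :
    ∫ t, stdNormalCDF (a + b * t) ∂(gaussianReal 0 1) = stdNormalCDF (a / √(1 + b ^ 2)) := by
  simp_rw [stdNormalCDF_eq_cdf, cdf_eq_real]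
  exact integral_gaussianReal_real_Iic_affine a b

theorem binormal_auc_general (μ σ : ℝ)
    (Φinv : ℝ → ℝ)
    (hinv' : ∀ x : ℝ, Φinv (stdNormalCDF x) = x) :
    ∫ p in (0:ℝ)..1, stdNormalCDF (μ + σ * Φinv p) =
      stdNormalCDF (μ / Real.sqrt (1 + σ ^ 2)) := by
  rw [integral_zero_one_eq_integral_comp_stdNormalCDF]
  simp_rw [hinv']
  exact integral_stdNormalCDF_affine μ σ

/-- for the binormal model,
`∫₀¹ Φ(μ + σ Φ⁻¹(p)) dp = Φ(μ/√(1+σ²))`. -/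
theorem binormal_auc (μ σ : ℝ) (hσ : 0 < σ)
    (Φinv : ℝ → ℝ)
    (hinv : ∀ p ∈ Set.Ioo (0:ℝ) 1, stdNormalCDF (Φinv p) = p)
    (hinv' : ∀ x : ℝ, Φinv (stdNormalCDF x) = x) :
    ∫ p in (0:ℝ)..1, stdNormalCDF (μ + σ * Φinv p) =
      stdNormalCDF (μ / Real.sqrt (1 + σ ^ 2)) :=
  binormal_auc_general μ σ Φinv hinv'
end
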